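/- arXiv:2412.00025 — 3 statements merged into one kernel-verified Lean document; each statement's English description precedes it below -/
import Mathlib

section
/- For every positive integer $i$, $\sum_{k=1}^{\infty} \frac{H_k^{(2)}}{k(i+k)} = \frac{\zeta(3)}{i} - \frac{\zeta(2)}{i^2} + \frac{\zeta(2) H_i}{i} - \frac{1}{i}\sum_{k=1}^{i-1} \frac{H_k}{k^2}$. -/
/-!
Since `i / (k (k + i)) = ∑_{r < i} 1 / ((k + r) (k + r + 1))`, `i` times the series is
`∑_{r < i} ∑_k H_k^{(2)} / ((k + r) (k + r + 1))`. Summation by parts turns the inner series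
into `∑_k 1 / (k² (k + r))`, which is `ζ(3)` for `r = 0` and, by partial fractions and the
telescoping sum `∑_k (1/k - 1/(k + r)) = H_r`, equals `ζ(2)/r - H_r/r²` for `r ≥ 1`.
-/

open scoped BigOperators

noncomputable def H (k : ℕ) : ℝ := ∑ i ∈ Finset.Icc 1 k, (1 : ℝ) / i
noncomputable def Hp (n k : ℕ) : ℝ := ∑ i ∈ Finset.Icc 1 k, (1 : ℝ) / (i : ℝ) ^ n
noncomputable def oh (n k : ℕ) : ℝ := ∑ i ∈ Finset.Icc 1 k, (1 : ℝ) / (2 * (i : ℝ) - 1) ^ n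
noncomputable def Li (n : ℕ) (x : ℝ) : ℝ := ∑' m : ℕ, x ^ (m + 1) / ((m : ℝ) + 1) ^ n

open Filter Topology Finset

theorem sum_Icc_one_eq_sum_range {M : Type*} [AddCommMonoid M] (f : ℕ → M) (n : ℕ) :
    ∑ i ∈ Icc 1 n, f i = ∑ j ∈ range n, f (j + 1) := by
  rw [range_eq_Ico, sum_Ico_add' f, zero_add, Ico_add_one_right_eq_Icc]

theorem H_eq_sum_range (k : ℕ) : H k = ∑ j ∈ range k, 1 / ((j : ℝ) + 1) := by
  simp [H, sum_Icc_one_eq_sum_range]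

theorem Hp_eq_sum_range (n k : ℕ) : Hp n k = ∑ j ∈ range k, 1 / ((j : ℝ) + 1) ^ n := by
  simp [Hp, sum_Icc_one_eq_sum_range]

theorem H_succ (k : ℕ) : H (k + 1) = H k + 1 / ((k : ℝ) + 1) := by
  rw [H_eq_sum_range, H_eq_sum_range, sum_range_succ]

theorem summable_one_div_add_one_pow {p : ℕ} (hp : 1 < p) :
    Summable (fun n : ℕ => 1 / ((n : ℝ) + 1) ^ p) := by
  simpa using (summable_nat_add_iff 1).mpr (Real.summable_one_div_nat_pow.mpr hp)

theorem riemannZeta_natCast_eq_ofReal_tsum {p : ℕ} (hp : 1 < p) :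
    riemannZeta p = ((∑' n : ℕ, 1 / ((n : ℝ) + 1) ^ p : ℝ) : ℂ) := by
  rw [zeta_eq_tsum_one_div_nat_add_one_cpow (by simpa using hp), Complex.ofReal_tsum]
  simp

theorem hasSum_sub_add_of_antitone {f : ℕ → ℝ} (hf : Antitone f)
    (hf0 : Tendsto f atTop (𝓝 0)) (r : ℕ) :
    HasSum (fun n => f n - f (n + r)) (∑ k ∈ range r, f k) := by
  have partial_sum (N : ℕ) : ∑ n ∈ range N, (f n - f (n + r))
      = ∑ k ∈ range r, f k - ∑ k ∈ range r, f (N + k) := by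
    have h := sum_range_add f N r
    rw [add_comm N r, sum_range_add f r N] at h
    simp only [sum_sub_distrib, add_comm _ r]
    linarith
  rw [hasSum_iff_tendsto_nat_of_nonneg (fun n => sub_nonneg.mpr (hf (n.le_add_right r)))]
  simp only [partial_sum]
  have htail : Tendsto (fun N => ∑ k ∈ range r, f (N + k)) atTop (𝓝 0) := by
    simpa using tendsto_finsetSum (range r)
      fun k _ => hf0.comp (tendsto_add_atTop_nat k)
  simpa using tendsto_const_nhds.sub htail

theorem hasSum_partialSum_mul_sub {a u : ℕ → ℝ} (ha : 0 ≤ a) (hsum : Summable a)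
    (hu : Antitone u) (hu0 : Tendsto u atTop (𝓝 0)) :
    HasSum (fun k => (∑ j ∈ range (k + 1), a j) * (u k - u (k + 1))) (∑' k, a k * u k) := by
  have hu_nonneg (k : ℕ) : 0 ≤ u k := hu.le_of_tendsto hu0 k
  have summable_mul : Summable (fun k => a k * u k) :=
    hsum.mul_right (u 0) |>.of_nonneg_of_le (fun k => mul_nonneg (ha k) (hu_nonneg k))
      fun k => mul_le_mul_of_nonneg_left (hu k.zero_le) (ha k)
  have partial_sum (N : ℕ) : ∑ k ∈ range N, (∑ j ∈ range (k + 1), a j) * (u k - u (k + 1))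
      = ∑ k ∈ range N, a k * u k - (∑ j ∈ range N, a j) * u N := by
    induction N with
    | zero => simp
    | succ N ih => rw [sum_range_succ, ih, sum_range_succ, sum_range_succ]; ring
  rw [hasSum_iff_tendsto_nat_of_nonneg fun k => mul_nonneg (sum_nonneg fun j _ => ha j)
    (sub_nonneg.mpr (hu k.le_succ))]
  simp only [partial_sum]
  simpa using summable_mul.hasSum.tendsto_sum_nat.sub
    (hsum.hasSum.tendsto_sum_nat.mul hu0)

theorem antitone_one_div_add {c : ℝ} (hc : 0 < c) : Antitone fun k : ℕ => 1 / ((k : ℝ) + c) :=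
  fun _ _ hkl => one_div_le_one_div_of_le (by positivity) (by gcongr)

theorem tendsto_one_div_add (c : ℝ) :
    Tendsto (fun k : ℕ => 1 / ((k : ℝ) + c)) atTop (𝓝 0) :=
  tendsto_const_nhds.div_atTop (tendsto_atTop_add_const_right _ c tendsto_natCast_atTop_atTop)

theorem hasSum_one_div_sub_one_div_add (r : ℕ) :
    HasSum (fun k : ℕ => 1 / ((k : ℝ) + 1) - 1 / ((k : ℝ) + 1 + r)) (H r) := by
  rw [H_eq_sum_range]
  convert hasSum_sub_add_of_antitone (antitone_one_div_add one_pos) (tendsto_one_div_add 1) r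
    using 2 with k
  push_cast
  ring

theorem hasSum_one_div_sq_mul_add {r : ℕ} (hr : 0 < r) :
    HasSum (fun k : ℕ => 1 / (((k : ℝ) + 1) ^ 2 * ((k : ℝ) + 1 + r)))
      ((∑' k : ℕ, 1 / ((k : ℝ) + 1) ^ 2) / r - H r / (r : ℝ) ^ 2) := by
  convert! ((summable_one_div_add_one_pow one_lt_two).hasSum.div_const r).sub
    ((hasSum_one_div_sub_one_div_add r).div_const ((r : ℝ) ^ 2)) using 2 with k
  field_simp
  ring

theorem hasSum_Hp_div_mul_add_one {n : ℕ} (hn : 1 < n) {c : ℝ} (hc : 0 ≤ c) :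
    HasSum (fun k : ℕ => Hp n (k + 1) / (((k : ℝ) + 1 + c) * ((k : ℝ) + 2 + c)))
      (∑' k : ℕ, 1 / (((k : ℝ) + 1) ^ n * ((k : ℝ) + 1 + c))) := by
  have := hasSum_partialSum_mul_sub (fun j => by positivity) (summable_one_div_add_one_pow hn)
    (antitone_one_div_add (by positivity : (0 : ℝ) < 1 + c)) (tendsto_one_div_add (1 + c))
  convert this using 1
  · ext k
    rw [Hp_eq_sum_range]
    push_cast
    field_simp
    ring
  · congr! 2 with k
    field_simp
    ring

theorem sum_range_one_div_mul_add_one {x : ℝ} (hx : 0 < x) (n : ℕ) :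
    ∑ r ∈ range n, 1 / ((x + r) * (x + r + 1)) = n / (x * (x + n)) := by
  induction n with
  | zero => simp
  | succ n ih =>
    rw [sum_range_succ, ih]
    push_cast
    field_simp
    ring

theorem hasSum_natCast_mul_Hp_div {n : ℕ} (hn : 1 < n) (i : ℕ) :
    HasSum (fun k : ℕ => i * Hp n (k + 1) / (((k : ℝ) + 1) * ((k : ℝ) + 1 + i)))
      (∑ r ∈ range i, ∑' k : ℕ, 1 / (((k : ℝ) + 1) ^ n * ((k : ℝ) + 1 + r))) := by
  convert! hasSum_sum fun (r : ℕ) _ => hasSum_Hp_div_mul_add_one hn r.cast_nonneg using 2 with k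
  have telescope := sum_range_one_div_mul_add_one (x := (k : ℝ) + 1) (by positivity) i
  simp only [div_eq_mul_one_div (Hp n (k + 1)), ← mul_sum]
  rw [mul_comm (i : ℝ), mul_div_assoc, ← telescope]
  congr! 2 with r
  ring

theorem sum_range_succ_tsum_one_div_sq_mul_add (m : ℕ) :
    ∑ r ∈ range (m + 1), ∑' k : ℕ, 1 / (((k : ℝ) + 1) ^ 2 * ((k : ℝ) + 1 + r))
      = ∑' k : ℕ, 1 / ((k : ℝ) + 1) ^ 3 + (∑' k : ℕ, 1 / ((k : ℝ) + 1) ^ 2) * H m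
        - ∑ r ∈ Icc 1 m, H r / (r : ℝ) ^ 2 := by
  have zeta_three : ∑' k : ℕ, 1 / (((k : ℝ) + 1) ^ 2 * ((k : ℝ) + 1 + (0 : ℕ)))
      = ∑' k : ℕ, 1 / ((k : ℝ) + 1) ^ 3 :=
    tsum_congr fun k => by push_cast; ring
  rw [sum_range_succ', zeta_three,
    sum_congr rfl fun r _ => (hasSum_one_div_sq_mul_add r.succ_pos).tsum_eq,
    sum_Icc_one_eq_sum_range, H_eq_sum_range, mul_sum, sum_sub_distrib]
  simp only [mul_one_div, Nat.cast_add, Nat.cast_one]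
  ring

theorem hasSum_Hp_two_div_mul_add {i : ℕ} (hi : 0 < i) :
    HasSum (fun k : ℕ => Hp 2 (k + 1) / (((k : ℝ) + 1) * ((i : ℝ) + ((k : ℝ) + 1))))
      ((∑' k : ℕ, 1 / ((k : ℝ) + 1) ^ 3) / i
        - (∑' k : ℕ, 1 / ((k : ℝ) + 1) ^ 2) / (i : ℝ) ^ 2
        + (∑' k : ℕ, 1 / ((k : ℝ) + 1) ^ 2) * H i / i
        - 1 / (i : ℝ) * ∑ k ∈ Icc 1 (i - 1), H k / (k : ℝ) ^ 2) := by
  obtain ⟨m, rfl⟩ := Nat.exists_eq_add_one_of_ne_zero hi.ne'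
  have h := (hasSum_natCast_mul_Hp_div one_lt_two (m + 1)).div_const ((m : ℝ) + 1)
  rw [sum_range_succ_tsum_one_div_sq_mul_add] at h
  convert! h using 1
  · ext k
    push_cast
    field_simp
    ring
  · rw [H_succ, Nat.add_sub_cancel]
    push_cast
    field_simp
    ring

theorem stmt15 (i : ℕ) (hi : 0 < i) : ∑' k : ℕ, ((Hp 2 (k+1) / (((k : ℝ) + 1) * ((i : ℝ) + ((k : ℝ) + 1))) : ℝ) : ℂ) = riemannZeta 3 / (i : ℂ) - riemannZeta 2 / (i : ℂ)^2 + riemannZeta 2 * ((H i : ℝ) : ℂ) / (i : ℂ) - (1 / (i : ℂ)) * ((∑ k ∈ Finset.Icc 1 (i-1), H k / (k : ℝ)^2 : ℝ) : ℂ) := by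
  rw [← Complex.ofReal_tsum, (hasSum_Hp_two_div_mul_add hi).tsum_eq,
    show (3 : ℂ) = (3 : ℕ) by norm_num, show (2 : ℂ) = (2 : ℕ) by norm_num,
    riemannZeta_natCast_eq_ofReal_tsum (by norm_num), riemannZeta_natCast_eq_ofReal_tsum one_lt_two]
  push_cast
  ring
end

section
/- For every positive integer $k$, the series $\sum_{i=1}^{\infty} \frac{h_i}{(i+k)^2}$ equals $\frac{7}{4}\zeta(3) + \zeta(2) h_k - 4\ln(2) h_k^{(2)} - 2\sum_{i=1}^{k} \frac{H_{i-1}}{(2i-1)^2} - H_k^{(2)} h_k + \sum_{i=1}^{k} \frac{h_i}{i^2}$. -/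
open scoped BigOperators

open Filter Finset Real Topology

namespace Stmt17Aux

lemma H_range (k : ℕ) : H k = ∑ i ∈ range k, (1:ℝ)/((i:ℝ)+1) := by
  rw [H, ← Finset.Ico_add_one_right_eq_Icc, Finset.sum_Ico_eq_sum_range]
  simp only [Nat.add_sub_cancel, Nat.succ_sub_one]
  refine Finset.sum_congr rfl fun i _ => ?_
  push_cast; ring_nf

lemma oh1_range (k : ℕ) : oh 1 k = ∑ i ∈ range k, (1:ℝ)/(2*(i:ℝ)+1) := by
  rw [oh, ← Finset.Ico_add_one_right_eq_Icc, Finset.sum_Ico_eq_sum_range]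
  simp only [Nat.add_sub_cancel, Nat.succ_sub_one]
  refine Finset.sum_congr rfl fun i _ => ?_
  push_cast; ring_nf

lemma oh2_range (k : ℕ) : oh 2 k = ∑ i ∈ range k, (1:ℝ)/(2*(i:ℝ)+1)^2 := by
  rw [oh, ← Finset.Ico_add_one_right_eq_Icc, Finset.sum_Ico_eq_sum_range]
  simp only [Nat.add_sub_cancel, Nat.succ_sub_one]
  refine Finset.sum_congr rfl fun i _ => ?_
  push_cast; ring_nf

lemma Hp2_range (k : ℕ) : Hp 2 k = ∑ i ∈ range k, (1:ℝ)/((i:ℝ)+1)^2 := by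
  rw [Hp, ← Finset.Ico_add_one_right_eq_Icc, Finset.sum_Ico_eq_sum_range]
  simp only [Nat.add_sub_cancel, Nat.succ_sub_one]
  refine Finset.sum_congr rfl fun i _ => ?_
  push_cast; ring_nf

lemma H_succ (k : ℕ) : H (k+1) = H k + 1/((k:ℝ)+1) := by
  simp [H_range, Finset.sum_range_succ]

lemma oh1_succ (k : ℕ) : oh 1 (k+1) = oh 1 k + 1/(2*(k:ℝ)+1) := by
  simp [oh1_range, Finset.sum_range_succ]

lemma oh2_succ (k : ℕ) : oh 2 (k+1) = oh 2 k + 1/(2*(k:ℝ)+1)^2 := by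
  simp [oh2_range, Finset.sum_range_succ]

lemma Hp2_succ (k : ℕ) : Hp 2 (k+1) = Hp 2 k + 1/((k:ℝ)+1)^2 := by
  simp [Hp2_range, Finset.sum_range_succ]

lemma H_zero : H 0 = 0 := by simp [H]
lemma oh1_one : oh 1 1 = 1 := by norm_num [oh]

lemma partial_tele (a : ℕ → ℝ) (m : ℕ) : ∀ N : ℕ,
    ∑ n ∈ range N, (a n - a (n+m)) = ∑ i ∈ range m, a i - ∑ i ∈ range m, a (N+i) := by
  intro N
  induction N with
  | zero => simp only [Finset.range_zero, Finset.sum_empty, Nat.zero_add, sub_self]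
  | succ N ih =>
      rw [Finset.sum_range_succ, ih]
      have h2 : ∑ i ∈ range m, (a (N+i) - a ((N+1)+i)) = a N - a (N+m) := by
        rw [Finset.sum_congr rfl (fun i (_ : i ∈ range m) =>
          (by rw [show (N+1)+i = N+(i+1) from by omega] :
            a (N+i) - a ((N+1)+i) = a (N+i) - a (N+(i+1))))]
        simpa using Finset.sum_range_sub' (fun i => a (N+i)) m
      have h4 : ∑ i ∈ range m, (a (N+i) - a ((N+1)+i))
          = ∑ i ∈ range m, a (N+i) - ∑ i ∈ range m, a ((N+1)+i) := Finset.sum_sub_distrib _ _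
      rw [h4] at h2
      linarith [h2]

lemma hasSum_tele (a : ℕ → ℝ) (hmono : Antitone a) (h0 : Tendsto a atTop (𝓝 0)) (m : ℕ) :
    HasSum (fun n => a n - a (n+m)) (∑ i ∈ range m, a i) := by
  rw [hasSum_iff_tendsto_nat_of_nonneg (fun n => sub_nonneg.2 (hmono (Nat.le_add_right n m)))]
  have key : (fun N => ∑ n ∈ range N, (a n - a (n+m)))
      = fun N => ∑ i ∈ range m, a i - ∑ i ∈ range m, a (N+i) := by
    funext N; exact partial_tele a m N
  rw [key]
  have h1 : Tendsto (fun N => ∑ i ∈ range m, a (N+i)) atTop (𝓝 0) := by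
    have := tendsto_finset_sum (range m)
      (fun i _ => h0.comp (tendsto_atTop_mono (fun N => Nat.le_add_right N i) tendsto_id))
    simpa using this
  simpa using tendsto_const_nhds.sub h1

lemma antitone_inv1 : Antitone (fun n : ℕ => 1/((n:ℝ)+1)) := by
  intro i j h
  apply one_div_le_one_div_of_le (by positivity)
  have : (i:ℝ) ≤ j := Nat.cast_le.2 h
  linarith

lemma tendsto_inv1 : Tendsto (fun n : ℕ => 1/((n:ℝ)+1)) atTop (𝓝 0) :=
  tendsto_one_div_add_atTop_nhds_zero_nat

lemma antitone_invodd : Antitone (fun n : ℕ => 1/(2*(n:ℝ)+1)) := by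
  intro i j h
  apply one_div_le_one_div_of_le (by positivity)
  have : (i:ℝ) ≤ j := Nat.cast_le.2 h
  linarith

lemma tendsto_invodd : Tendsto (fun n : ℕ => 1/(2*(n:ℝ)+1)) atTop (𝓝 0) := by
  apply squeeze_zero (fun n => by positivity) (fun n => ?_) tendsto_inv1
  apply one_div_le_one_div_of_le (by positivity)
  have : (0:ℝ) ≤ n := Nat.cast_nonneg n
  linarith

lemma hasSum_harm (m : ℕ) :
    HasSum (fun n : ℕ => 1/((n:ℝ)+1) - 1/((n:ℝ)+1+(m:ℝ))) (H m) := by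
  have := hasSum_tele _ antitone_inv1 tendsto_inv1 m
  rw [← H_range] at this
  have he : (fun n : ℕ => 1/((n:ℝ)+1) - 1/(((n+m:ℕ):ℝ)+1))
      = fun n : ℕ => 1/((n:ℝ)+1) - 1/((n:ℝ)+1+(m:ℝ)) := by
    funext n; push_cast; ring_nf
  rwa [he] at this

lemma hasSum_odd (m : ℕ) :
    HasSum (fun n : ℕ => 1/(2*(n:ℝ)+1) - 1/(2*(n:ℝ)+2*(m:ℝ)+1)) (oh 1 m) := by
  have := hasSum_tele _ antitone_invodd tendsto_invodd m
  rw [← oh1_range] at this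
  have he : (fun n : ℕ => 1/(2*(n:ℝ)+1) - 1/(2*((n+m:ℕ):ℝ)+1))
      = fun n : ℕ => 1/(2*(n:ℝ)+1) - 1/(2*(n:ℝ)+2*(m:ℝ)+1) := by
    funext n; push_cast; ring_nf
  rwa [he] at this

noncomputable def Hr (k : ℕ) : ℝ := ∑ i ∈ range k, (1:ℝ)/((i:ℝ)+1)

lemma Hr_eq_H (k : ℕ) : Hr k = H k := (H_range k).symm

lemma harmonic_eq_Hr (n : ℕ) : ((harmonic n : ℚ) : ℝ) = Hr n := by
  unfold harmonic Hr
  push_cast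
  refine Finset.sum_congr rfl fun i _ => ?_
  rw [one_div]

lemma partial_log2 (N : ℕ) :
    ∑ n ∈ range N, (1/(2*(n:ℝ)+1) - 1/(2*(n:ℝ)+2)) = Hr (2*N) - Hr N := by
  induction N with
  | zero => simp [Hr]
  | succ N ih =>
      have h2 : 2*(N+1) = (2*N+1)+1 := by ring
      rw [Finset.sum_range_succ, ih, h2]
      unfold Hr
      rw [Finset.sum_range_succ, Finset.sum_range_succ, Finset.sum_range_succ]
      push_cast
      field_simp
      ring

lemma tendsto_two_mul : Tendsto (fun N : ℕ => 2*N) atTop atTop :=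
  tendsto_atTop_mono (fun n => by simp only [id_eq]; omega) tendsto_id

lemma hasSum_log2 :
    HasSum (fun n : ℕ => 1/(2*(n:ℝ)+1) - 1/(2*(n:ℝ)+2)) (Real.log 2) := by
  have hnn : ∀ n : ℕ, 0 ≤ 1/(2*(n:ℝ)+1) - 1/(2*(n:ℝ)+2) := by
    intro n
    have h1 : (0:ℝ) < 2*(n:ℝ)+1 := by positivity
    have h2 : (2*(n:ℝ)+1) ≤ 2*(n:ℝ)+2 := by linarith
    have := one_div_le_one_div_of_le h1 h2
    linarith
  rw [hasSum_iff_tendsto_nat_of_nonneg hnn]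
  have key : (fun N => ∑ n ∈ range N, (1/(2*(n:ℝ)+1) - 1/(2*(n:ℝ)+2)))
      = fun N => Hr (2*N) - Hr N := funext partial_log2
  rw [key]
  have t1 : Tendsto (fun n : ℕ => Hr n - Real.log n) atTop (𝓝 Real.eulerMascheroniConstant) := by
    apply Real.tendsto_harmonic_sub_log.congr
    intro n; rw [harmonic_eq_Hr]
  have t2 : Tendsto (fun N : ℕ => Hr (2*N) - Real.log ((2*N : ℕ))) atTop
      (𝓝 Real.eulerMascheroniConstant) := by exact t1.comp tendsto_two_mul
  have t3 : Tendsto (fun N : ℕ => (Hr (2*N) - Real.log ((2*N : ℕ))) - (Hr N - Real.log N)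
      + Real.log 2) atTop (𝓝 (Real.eulerMascheroniConstant - Real.eulerMascheroniConstant
      + Real.log 2)) := Tendsto.add_const _ (t2.sub t1)
  rw [sub_self, zero_add] at t3
  apply t3.congr'
  filter_upwards [eventually_ge_atTop 1] with N hN
  have hN0 : (N:ℝ) ≠ 0 := by
    have : (1:ℝ) ≤ N := by exact_mod_cast hN
    linarith
  have hlog : Real.log ((2*N : ℕ) : ℝ) = Real.log 2 + Real.log N := by
    push_cast
    rw [Real.log_mul (by norm_num) hN0]
  rw [hlog]; ring

lemma hasSum_basel : HasSum (fun n : ℕ => 1/((n:ℝ)+1)^2) (π^2/6) := by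
  have h := (hasSum_nat_add_iff' 1).2 hasSum_zeta_two
  have he : (fun n : ℕ => 1/(((n+1:ℕ)):ℝ)^2) = fun n : ℕ => 1/((n:ℝ)+1)^2 := by
    funext n; push_cast; ring_nf
  rw [he] at h
  simpa using h

lemma summable_cube : Summable (fun n : ℕ => 1/((n:ℝ)+1)^3) := by
  have h0 : Summable (fun n : ℕ => 1/(n:ℝ)^3) :=
    Real.summable_one_div_nat_pow.2 (by norm_num)
  have h := (summable_nat_add_iff 1).2 h0
  have he : (fun n : ℕ => 1/(((n+1:ℕ)):ℝ)^3) = fun n : ℕ => 1/((n:ℝ)+1)^3 := by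
    funext n; push_cast; ring_nf
  rwa [he] at h

noncomputable def z3 : ℝ := ∑' n : ℕ, 1/((n:ℝ)+1)^3

noncomputable def F : ℕ × ℕ → ℝ :=
  fun p => 1/(((p.1:ℝ)+1)*((p.2:ℝ)+1)*((p.1:ℝ)+(p.2:ℝ)+2))

lemma F_nonneg (p : ℕ × ℕ) : 0 ≤ F p := by unfold F; positivity

lemma two_sqrt_le (a b : ℝ) (ha : 0 ≤ a) (hb : 0 ≤ b) :
    2 * Real.sqrt (a*b) ≤ a + b := by
  rw [Real.sqrt_mul ha]
  nlinarith [sq_nonneg (Real.sqrt a - Real.sqrt b), Real.sq_sqrt ha, Real.sq_sqrt hb,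
    Real.sqrt_nonneg a, Real.sqrt_nonneg b]

noncomputable def gg : ℕ → ℝ := fun n => 1/(((n:ℝ)+1) * Real.sqrt ((n:ℝ)+1))

lemma gg_nonneg (n : ℕ) : 0 ≤ gg n := by unfold gg; positivity

lemma summable_gg : Summable gg := by
  have h0 : Summable (fun n : ℕ => 1/(n:ℝ)^((3:ℝ)/2)) :=
    Real.summable_one_div_nat_rpow.2 (by norm_num)
  have h := (summable_nat_add_iff 1).2 h0
  apply h.congr
  intro n
  unfold gg
  have h1 : (0:ℝ) ≤ (n:ℝ)+1 := by positivity
  rw [show (((n+1:ℕ)):ℝ) = (n:ℝ)+1 by push_cast; ring]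
  rw [show ((3:ℝ)/2) = 1 + 1/2 by norm_num, Real.rpow_add (by linarith), Real.rpow_one,
    ← Real.sqrt_eq_rpow]

lemma frac_bound (a b : ℝ) (ha : 1 ≤ a) (hb : 1 ≤ b) :
    1/(a*b*(a+b)) ≤ 1/2 * (1/(a*Real.sqrt a) * (1/(b*Real.sqrt b))) := by
  have ha0 : (0:ℝ) < a := by linarith
  have hb0 : (0:ℝ) < b := by linarith
  have hsa := Real.sqrt_pos.2 ha0
  have hsb := Real.sqrt_pos.2 hb0
  have hsab : Real.sqrt a * Real.sqrt b = Real.sqrt (a*b) := (Real.sqrt_mul ha0.le b).symm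
  have key : 2 * Real.sqrt (a*b) ≤ a + b := two_sqrt_le a b ha0.le hb0.le
  have hrhs : 1/2 * (1/(a*Real.sqrt a) * (1/(b*Real.sqrt b)))
      = 1/(2*(a*Real.sqrt a*(b*Real.sqrt b))) := by ring
  rw [hrhs]
  apply one_div_le_one_div_of_le (by positivity)
  have h3 : (2*Real.sqrt (a*b))*(a*b) ≤ (a+b)*(a*b) :=
    mul_le_mul_of_nonneg_right key (by positivity)
  have h4 : a*Real.sqrt a*(b*Real.sqrt b) = Real.sqrt (a*b)*(a*b) := by
    rw [← hsab]; ring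
  nlinarith [h3, h4]

lemma F_le (p : ℕ × ℕ) : F p ≤ (1/2) * (gg p.1 * gg p.2) := by
  obtain ⟨m, n⟩ := p
  unfold F gg
  dsimp only
  rw [show ((m:ℝ)+(n:ℝ)+2) = ((m:ℝ)+1)+((n:ℝ)+1) from by ring]
  exact frac_bound _ _ (le_add_of_nonneg_left (Nat.cast_nonneg m))
    (le_add_of_nonneg_left (Nat.cast_nonneg n))

lemma summable_F : Summable F := by
  apply Summable.of_nonneg_of_le F_nonneg F_le
  exact ((summable_gg.mul_of_nonneg summable_gg gg_nonneg gg_nonneg).mul_left (1/2))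

lemma inner_m (m : ℕ) :
    HasSum (fun n : ℕ => F (m, n)) (H (m+1) / ((m:ℝ)+1)^2) := by
  have h := (hasSum_harm (m+1)).mul_left (1/((m:ℝ)+1)^2)
  have he : (fun n : ℕ => 1/((m:ℝ)+1)^2 * (1/((n:ℝ)+1) - 1/((n:ℝ)+1+((m+1:ℕ):ℝ))))
      = fun n : ℕ => F (m, n) := by
    funext n
    unfold F
    push_cast
    have h1 : ((n:ℝ)+1) ≠ 0 := by positivity
    have h2 : ((m:ℝ)+1) ≠ 0 := by positivity
    have h3 : ((n:ℝ)+1+((m:ℝ)+1)) ≠ 0 := by positivity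
    field_simp
    ring
  rw [he] at h
  convert h using 1
  rfl
  ring

lemma hasSum_A : HasSum (fun m : ℕ => H (m+1) / ((m:ℝ)+1)^2) (∑' p : ℕ × ℕ, F p) :=
  summable_F.hasSum.prod_fiberwise inner_m

lemma tsum_antidiagonal (f : ℕ × ℕ → ℝ) (hf : Summable f) :
    ∑' p : ℕ × ℕ, f p = ∑' s : ℕ, ∑ p ∈ Finset.HasAntidiagonal.antidiagonal s, f p := by
  rw [← Finset.HasAntidiagonal.sigmaAntidiagonalEquivProd.tsum_eq f]
  rw [Summable.tsum_sigma (show Summable (fun c : (Σ n : ℕ, {x // x ∈ Finset.HasAntidiagonal.antidiagonal n}) =>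
    f (Finset.HasAntidiagonal.sigmaAntidiagonalEquivProd c)) from
    Finset.HasAntidiagonal.sigmaAntidiagonalEquivProd.summable_iff.2 hf)]
  exact tsum_congr fun s => Finset.tsum_subtype (Finset.HasAntidiagonal.antidiagonal s) f

lemma group_F (s : ℕ) :
    ∑ p ∈ Finset.HasAntidiagonal.antidiagonal s, F p = 2 * H (s+1) / ((s:ℝ)+2)^2 := by
  rw [Finset.Nat.sum_antidiagonal_eq_sum_range_succ_mk]
  have hterm : ∀ k ∈ range (s+1), F (k, s-k)
      = 1/((s:ℝ)+2)^2 * (1/((k:ℝ)+1) + 1/(((s-k:ℕ):ℝ)+1)) := by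
    intro k hk
    have hks : k ≤ s := by simpa using Nat.lt_succ_iff.1 (Finset.mem_range.1 hk)
    unfold F
    have hcast : ((s-k:ℕ):ℝ) = (s:ℝ) - (k:ℝ) := by
      rw [Nat.cast_sub hks]
    rw [hcast]
    have h1 : ((k:ℝ)+1) ≠ 0 := by positivity
    have h2 : ((s:ℝ)-(k:ℝ)+1) ≠ 0 := by
      have : (k:ℝ) ≤ s := Nat.cast_le.2 hks
      intro hc; linarith
    have h3 : ((s:ℝ)+2) ≠ 0 := by positivity
    have h4 : ((k:ℝ)+((s:ℝ)-(k:ℝ))+2) = (s:ℝ)+2 := by ring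
    rw [h4]
    field_simp
    ring
  rw [Finset.sum_congr rfl hterm, ← Finset.mul_sum, Finset.sum_add_distrib]
  have hrefl : ∑ k ∈ range (s+1), 1/(((s-k:ℕ):ℝ)+1) = ∑ k ∈ range (s+1), 1/((k:ℝ)+1) := by
    rw [← Finset.sum_range_reflect (fun k => 1/((k:ℝ)+1)) (s+1)]
    apply Finset.sum_congr rfl
    intro j hj
    rw [show s+1-1-j = s-j from by omega]
  rw [hrefl, ← H_range]
  ring

lemma summable_B : Summable (fun m : ℕ => H m / ((m:ℝ)+1)^2) := by
  apply Summable.of_nonneg_of_le (fun m => ?_) (fun m => ?_) hasSum_A.summable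
  · have h0 : 0 ≤ H m := by rw [H_range]; positivity
    positivity
  · have hnum : H m ≤ H (m+1) := by
      rw [H_succ]
      have : (0:ℝ) ≤ 1/((m:ℝ)+1) := by positivity
      linarith
    rw [div_eq_mul_inv, div_eq_mul_inv]
    exact mul_le_mul_of_nonneg_right hnum (by positivity)

lemma tsumA_eq : ∑' m : ℕ, H (m+1)/((m:ℝ)+1)^2
    = (∑' m : ℕ, H m/((m:ℝ)+1)^2) + z3 := by
  rw [z3, ← Summable.tsum_add summable_B summable_cube]
  apply tsum_congr
  intro m
  rw [H_succ]
  have hx : ((m:ℝ)+1) ≠ 0 := by positivity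
  field_simp

lemma Z_eq_two_B : ∑' p : ℕ × ℕ, F p = 2 * ∑' m : ℕ, H m/((m:ℝ)+1)^2 := by
  have h1 : ∑' p : ℕ × ℕ, F p = ∑' s : ℕ, 2*(H (s+1)/((s:ℝ)+2)^2) := by
    rw [tsum_antidiagonal F summable_F]
    exact tsum_congr fun s => by rw [group_F]; ring
  have h2 : ∑' m : ℕ, H m/((m:ℝ)+1)^2 = ∑' s : ℕ, H (s+1)/((s:ℝ)+2)^2 := by
    rw [Summable.tsum_eq_zero_add summable_B]
    rw [H_zero]
    simp only [zero_div, zero_add]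
    apply tsum_congr
    intro s
    rw [show (((s+1:ℕ)):ℝ) = (s:ℝ)+1 from by push_cast; ring]
    ring_nf
  rw [h1, h2, tsum_mul_left]

lemma B_eq_z3 : ∑' m : ℕ, H m / ((m:ℝ)+1)^2 = z3 := by
  have h1 := hasSum_A.tsum_eq
  have h2 := tsumA_eq
  have h3 := Z_eq_two_B
  linarith [h1, h2, h3]

lemma Z_eq_two_z3 : ∑' p : ℕ × ℕ, F p = 2 * z3 := by
  rw [Z_eq_two_B, B_eq_z3]

lemma inj_two_mul : Function.Injective (fun k : ℕ => 2*k) := fun a b h => by dsimp only at h; omega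

lemma inj_two_mul_add_one : Function.Injective (fun k : ℕ => 2*k+1) := fun a b h => by dsimp only at h; omega

lemma split_fst (g : ℕ × ℕ → ℝ) (hg : Summable g) :
    ∑' q : ℕ × ℕ, g q
      = (∑' q : ℕ × ℕ, g (2*q.1, q.2)) + ∑' q : ℕ × ℕ, g (2*q.1+1, q.2) := by
  have h1 : Summable (fun q : ℕ × ℕ => g (2*q.1, q.2)) := by
    apply hg.comp_injective
    intro a b hab
    have h1 := congrArg Prod.fst hab
    have h2 := congrArg Prod.snd hab
    simp only at h1 h2
    exact Prod.ext (by omega) h2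
  have h2 : Summable (fun q : ℕ × ℕ => g (2*q.1+1, q.2)) := by
    apply hg.comp_injective
    intro a b hab
    have h1 := congrArg Prod.fst hab
    have h2 := congrArg Prod.snd hab
    simp only at h1 h2
    exact Prod.ext (by omega) h2
  have hA : HasSum (fun m : ℕ => ∑' n : ℕ, g (2*m, n)) (∑' q : ℕ × ℕ, g (2*q.1, q.2)) :=
    h1.hasSum.prod_fiberwise (fun m => (h1.prod_factor m).hasSum)
  have hB : HasSum (fun m : ℕ => ∑' n : ℕ, g (2*m+1, n)) (∑' q : ℕ × ℕ, g (2*q.1+1, q.2)) :=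
    h2.hasSum.prod_fiberwise (fun m => (h2.prod_factor m).hasSum)
  calc ∑' q : ℕ × ℕ, g q = ∑' (m : ℕ) (n : ℕ), g (m, n) := Summable.tsum_prod hg
    _ = (∑' k : ℕ, ∑' n : ℕ, g (2*k, n)) + ∑' k : ℕ, ∑' n : ℕ, g (2*k+1, n) :=
        (tsum_even_add_odd (f := fun m => ∑' n : ℕ, g (m, n)) hA.summable hB.summable).symm
    _ = (∑' q : ℕ × ℕ, g (2*q.1, q.2)) + ∑' q : ℕ × ℕ, g (2*q.1+1, q.2) := by
        rw [hA.tsum_eq, hB.tsum_eq]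

lemma split_snd (g : ℕ × ℕ → ℝ) (hg : Summable g) :
    ∑' q : ℕ × ℕ, g q
      = (∑' q : ℕ × ℕ, g (q.1, 2*q.2)) + ∑' q : ℕ × ℕ, g (q.1, 2*q.2+1) := by
  have h1 : Summable (fun q : ℕ × ℕ => g (q.1, 2*q.2)) := by
    apply hg.comp_injective
    intro a b hab
    have h1 := congrArg Prod.fst hab
    have h2 := congrArg Prod.snd hab
    simp only at h1 h2
    exact Prod.ext h1 (by omega)
  have h2 : Summable (fun q : ℕ × ℕ => g (q.1, 2*q.2+1)) := by
    apply hg.comp_injective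
    intro a b hab
    have h1 := congrArg Prod.fst hab
    have h2 := congrArg Prod.snd hab
    simp only at h1 h2
    exact Prod.ext h1 (by omega)
  have hA : HasSum (fun m : ℕ => ∑' y : ℕ, g (m, 2*y)) (∑' q : ℕ × ℕ, g (q.1, 2*q.2)) :=
    h1.hasSum.prod_fiberwise (fun m => (h1.prod_factor m).hasSum)
  have hB : HasSum (fun m : ℕ => ∑' y : ℕ, g (m, 2*y+1)) (∑' q : ℕ × ℕ, g (q.1, 2*q.2+1)) :=
    h2.hasSum.prod_fiberwise (fun m => (h2.prod_factor m).hasSum)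
  calc ∑' q : ℕ × ℕ, g q = ∑' (m : ℕ) (n : ℕ), g (m, n) := Summable.tsum_prod hg
    _ = ∑' m : ℕ, ((∑' y : ℕ, g (m, 2*y)) + ∑' y : ℕ, g (m, 2*y+1)) := by
        apply tsum_congr
        intro m
        exact (tsum_even_add_odd (f := fun n => g (m, n))
          ((hg.prod_factor m).comp_injective inj_two_mul)
          ((hg.prod_factor m).comp_injective inj_two_mul_add_one)).symm
    _ = (∑' m : ℕ, ∑' y : ℕ, g (m, 2*y)) + ∑' m : ℕ, ∑' y : ℕ, g (m, 2*y+1) :=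
        Summable.tsum_add hA.summable hB.summable
    _ = _ := by rw [hA.tsum_eq, hB.tsum_eq]

lemma sFee : Summable (fun q : ℕ × ℕ => F (2*q.1, 2*q.2)) := by
  apply summable_F.comp_injective
  intro a b hab
  have h1 := congrArg Prod.fst hab
  have h2 := congrArg Prod.snd hab
  simp only at h1 h2
  exact Prod.ext (by omega) (by omega)

lemma sFoe : Summable (fun q : ℕ × ℕ => F (2*q.1+1, 2*q.2)) := by
  apply summable_F.comp_injective
  intro a b hab
  have h1 := congrArg Prod.fst hab
  have h2 := congrArg Prod.snd hab
  simp only at h1 h2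
  exact Prod.ext (by omega) (by omega)

lemma F_swap (a b : ℕ) : F (a, b) = F (b, a) := by
  unfold F
  dsimp only
  ring_nf

lemma hdec : ∑' p : ℕ × ℕ, F p
    = ((∑' q : ℕ × ℕ, F (2*q.1, 2*q.2)) + ∑' q : ℕ × ℕ, F (2*q.1, 2*q.2+1))
      + ((∑' q : ℕ × ℕ, F (2*q.1+1, 2*q.2)) + ∑' q : ℕ × ℕ, F (2*q.1+1, 2*q.2+1)) := by
  have h1 : Summable (fun q : ℕ × ℕ => F (2*q.1, q.2)) := by
    apply summable_F.comp_injective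
    intro a b hab
    have h1 := congrArg Prod.fst hab
    have h2 := congrArg Prod.snd hab
    simp only at h1 h2
    exact Prod.ext (by omega) h2
  have h2 : Summable (fun q : ℕ × ℕ => F (2*q.1+1, q.2)) := by
    apply summable_F.comp_injective
    intro a b hab
    have h1 := congrArg Prod.fst hab
    have h2 := congrArg Prod.snd hab
    simp only at h1 h2
    exact Prod.ext (by omega) h2
  rw [split_fst F summable_F, split_snd _ h1, split_snd _ h2]

noncomputable def S : ℝ := ∑' i : ℕ, oh 1 (i+1) / ((i:ℝ)+1)^2

lemma inner_oe (x : ℕ) :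
    HasSum (fun y : ℕ => F (2*x+1, 2*y)) (oh 1 (x+1) / (2*((x:ℝ)+1))^2) := by
  have h := (hasSum_odd (x+1)).mul_left (1/(2*((x:ℝ)+1))^2)
  have he : (fun y : ℕ => 1/(2*((x:ℝ)+1))^2 * (1/(2*(y:ℝ)+1) - 1/(2*(y:ℝ)+2*((x+1:ℕ):ℝ)+1)))
      = fun y : ℕ => F (2*x+1, 2*y) := by
    funext y
    unfold F
    push_cast
    have h1 : (2*(y:ℝ)+1) ≠ 0 := by positivity
    have h2 : (2*(x:ℝ)+2) ≠ 0 := by positivity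
    have h3 : (2*(y:ℝ)+2*((x:ℝ)+1)+1) ≠ 0 := by positivity
    have h4 : (2*(x:ℝ)+1+1) = 2*(x:ℝ)+2 := by ring
    field_simp
    ring
  rw [he] at h
  convert h using 1
  rfl
  ring

lemma hOE : HasSum (fun x : ℕ => oh 1 (x+1) / (2*((x:ℝ)+1))^2)
    (∑' q : ℕ × ℕ, F (2*q.1+1, 2*q.2)) :=
  sFoe.hasSum.prod_fiberwise inner_oe

lemma summable_S : Summable (fun i : ℕ => oh 1 (i+1) / ((i:ℝ)+1)^2) := by
  apply (hOE.summable.mul_left 4).congr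
  intro i
  rw [show (2*((i:ℝ)+1))^2 = 4*((i:ℝ)+1)^2 from by ring]
  have h1 : ((i:ℝ)+1)^2 ≠ 0 := by positivity
  field_simp

lemma hFoe : ∑' q : ℕ × ℕ, F (2*q.1+1, 2*q.2) = (1/4) * S := by
  rw [← hOE.tsum_eq, S]
  rw [← tsum_mul_left]
  apply tsum_congr
  intro x
  rw [show (2*((x:ℝ)+1))^2 = 4*((x:ℝ)+1)^2 from by ring]
  have h1 : ((x:ℝ)+1)^2 ≠ 0 := by positivity
  field_simp

lemma hFeo : ∑' q : ℕ × ℕ, F (2*q.1, 2*q.2+1) = (1/4) * S := by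
  rw [← hFoe]
  rw [← (Equiv.prodComm ℕ ℕ).tsum_eq (fun q : ℕ × ℕ => F (2*q.1+1, 2*q.2))]
  apply tsum_congr
  intro q
  exact F_swap (2*q.1) (2*q.2+1)

lemma group_V (s : ℕ) :
    ∑ p ∈ Finset.HasAntidiagonal.antidiagonal s, F (2*p.1, 2*p.2) = oh 1 (s+1) / (2*((s:ℝ)+1)^2) := by
  rw [Finset.Nat.sum_antidiagonal_eq_sum_range_succ_mk]
  have hterm : ∀ k ∈ range (s+1), F (2*k, 2*(s-k))
      = 1/(2*(s:ℝ)+2)^2 * (1/(2*(k:ℝ)+1) + 1/(2*((s-k:ℕ):ℝ)+1)) := by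
    intro k hk
    have hks : k ≤ s := by simpa using Nat.lt_succ_iff.1 (Finset.mem_range.1 hk)
    unfold F
    have hcast : ((s-k:ℕ):ℝ) = (s:ℝ) - (k:ℝ) := by rw [Nat.cast_sub hks]
    have hkr : (k:ℝ) ≤ s := Nat.cast_le.2 hks
    push_cast [hcast]
    have h1 : (2*(k:ℝ)+1) ≠ 0 := by positivity
    have h2 : (2*((s:ℝ)-(k:ℝ))+1) ≠ 0 := by intro hc; linarith
    have h3 : (2*(s:ℝ)+2) ≠ 0 := by positivity
    have h5 : (2*(k:ℝ)+2*((s:ℝ)-(k:ℝ))+2) ≠ 0 := by intro hc; linarith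
    field_simp
    ring
  rw [Finset.sum_congr rfl hterm, ← Finset.mul_sum, Finset.sum_add_distrib]
  have hrefl : ∑ k ∈ range (s+1), 1/(2*((s-k:ℕ):ℝ)+1)
      = ∑ k ∈ range (s+1), 1/(2*(k:ℝ)+1) := by
    rw [← Finset.sum_range_reflect (fun k => 1/(2*(k:ℝ)+1)) (s+1)]
    apply Finset.sum_congr rfl
    intro j hj
    rw [show s+1-1-j = s-j from by omega]
  rw [hrefl, ← oh1_range]
  have hx : ((s:ℝ)+1) ≠ 0 := by positivity
  field_simp
  ring

lemma hFee : ∑' q : ℕ × ℕ, F (2*q.1, 2*q.2) = (1/2) * S := by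
  rw [tsum_antidiagonal _ sFee]
  rw [tsum_congr group_V, S, ← tsum_mul_left]
  apply tsum_congr
  intro s
  have hx : ((s:ℝ)+1) ≠ 0 := by positivity
  field_simp

lemma hFoo : ∑' q : ℕ × ℕ, F (2*q.1+1, 2*q.2+1) = (1/4) * z3 := by
  have he : (fun q : ℕ × ℕ => F (2*q.1+1, 2*q.2+1)) = fun q : ℕ × ℕ => (1/8) * F q := by
    funext q
    unfold F
    dsimp only
    push_cast
    have h1 : ((q.1:ℝ)+1) ≠ 0 := by positivity
    have h2 : ((q.2:ℝ)+1) ≠ 0 := by positivity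
    have h3 : ((q.1:ℝ)+(q.2:ℝ)+2) ≠ 0 := by positivity
    have h4 : (2*(q.1:ℝ)+1+1) ≠ 0 := by positivity
    have h5 : (2*(q.2:ℝ)+1+1) ≠ 0 := by positivity
    have h6 : (2*(q.1:ℝ)+1+(2*(q.2:ℝ)+1)+2) ≠ 0 := by positivity
    field_simp
    ring
  rw [he, tsum_mul_left, Z_eq_two_z3]
  ring

lemma S_eq : S = (7/4) * z3 := by
  have h := hdec
  rw [Z_eq_two_z3, hFee, hFeo, hFoe, hFoo] at h
  linarith

lemma hasSum_S : HasSum (fun i : ℕ => oh 1 (i+1) / ((i:ℝ)+1)^2) ((7/4)*z3) := by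
  have h2 : HasSum (fun i : ℕ => oh 1 (i+1) / ((i:ℝ)+1)^2) S := summable_S.hasSum
  rwa [S_eq] at h2

noncomputable def RS (k : ℕ) : ℝ :=
  7/4*z3 + π^2/6 * oh 1 k - 4*Real.log 2 * oh 2 k
    - 2*(∑ i ∈ Finset.Icc 1 k, H (i-1) / (2*(i:ℝ)-1)^2)
    - Hp 2 k * oh 1 k + ∑ i ∈ Finset.Icc 1 k, oh 1 i/(i:ℝ)^2

lemma comp1 (k : ℕ) : HasSum (fun n : ℕ => 1/(2*(n:ℝ)+3) - 1/(2*(n:ℝ)+4))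
    (Real.log 2 - (1 - 1/2)) := by
  have h := (hasSum_nat_add_iff' 1).2 hasSum_log2
  have he : (fun n : ℕ => 1/(2*((n+1:ℕ):ℝ)+1) - 1/(2*((n+1:ℕ):ℝ)+2))
      = fun n : ℕ => 1/(2*(n:ℝ)+3) - 1/(2*(n:ℝ)+4) := by
    funext n; push_cast; ring_nf
  rw [he] at h
  convert h using 1
  rfl
  norm_num

lemma comp2 (k : ℕ) : HasSum (fun n : ℕ => 1/((n:ℝ)+2) - 1/((n:ℝ)+2+(k:ℝ)))
    (H k - (1 - 1/((k:ℝ)+1))) := by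
  have h := (hasSum_nat_add_iff' 1).2 (hasSum_harm k)
  have he : (fun n : ℕ => 1/(((n+1:ℕ):ℝ)+1) - 1/(((n+1:ℕ):ℝ)+1+(k:ℝ)))
      = fun n : ℕ => 1/((n:ℝ)+2) - 1/((n:ℝ)+2+(k:ℝ)) := by
    funext n; push_cast; ring_nf
  rw [he] at h
  convert h using 1
  rfl
  norm_num
  ring

lemma comp3 (k : ℕ) : HasSum (fun n : ℕ => 1/((n:ℝ)+(k:ℝ)+2)^2) (π^2/6 - Hp 2 (k+1)) := by
  have h := (hasSum_nat_add_iff' (k+1)).2 hasSum_basel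
  have he : (fun n : ℕ => 1/(((n+(k+1):ℕ):ℝ)+1)^2)
      = fun n : ℕ => 1/((n:ℝ)+(k:ℝ)+2)^2 := by
    funext n; push_cast; ring_nf
  rw [he] at h
  convert h using 2
  rfl
  exact Hp2_range (k+1)

lemma hg (k : ℕ) : HasSum (fun i : ℕ => 1/((2*(i:ℝ)+3)*((i:ℝ)+(k:ℝ)+2)^2))
    (2/(2*(k:ℝ)+1)^2 * (2*(Real.log 2 - (1 - 1/2)) + (H k - (1 - 1/((k:ℝ)+1))))
      - 1/(2*(k:ℝ)+1) * (π^2/6 - Hp 2 (k+1))) := by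
  have h := ((((comp1 k).mul_left 2).add (comp2 k)).mul_left (2/(2*(k:ℝ)+1)^2)).sub
    ((comp3 k).mul_left (1/(2*(k:ℝ)+1)))
  have he : (fun i : ℕ => 2/(2*(k:ℝ)+1)^2 * (2*(1/(2*(i:ℝ)+3) - 1/(2*(i:ℝ)+4))
        + (1/((i:ℝ)+2) - 1/((i:ℝ)+2+(k:ℝ))))
      - 1/(2*(k:ℝ)+1) * (1/((i:ℝ)+(k:ℝ)+2)^2))
      = fun i : ℕ => 1/((2*(i:ℝ)+3)*((i:ℝ)+(k:ℝ)+2)^2) := by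
    funext i
    have h1 : (2*(i:ℝ)+3) ≠ 0 := by positivity
    have h2 : (2*(i:ℝ)+4) ≠ 0 := by positivity
    have h3 : ((i:ℝ)+2) ≠ 0 := by positivity
    have h4 : ((i:ℝ)+2+(k:ℝ)) ≠ 0 := by positivity
    have h5 : ((i:ℝ)+(k:ℝ)+2) ≠ 0 := by positivity
    have h6 : (2*(k:ℝ)+1) ≠ 0 := by positivity
    field_simp
    ring
  rw [← he]
  exact h

lemma RS_succ (k : ℕ) : RS (k+1) = RS k - 1/((k:ℝ)+1)^2
    - (2/(2*(k:ℝ)+1)^2 * (2*(Real.log 2 - (1 - 1/2)) + (H k - (1 - 1/((k:ℝ)+1))))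
      - 1/(2*(k:ℝ)+1) * (π^2/6 - Hp 2 (k+1))) := by
  have hIcc1 : ∑ i ∈ Finset.Icc 1 (k+1), H (i-1)/(2*(i:ℝ)-1)^2
      = (∑ i ∈ Finset.Icc 1 k, H (i-1)/(2*(i:ℝ)-1)^2) + H k/(2*(k:ℝ)+1)^2 := by
    rw [Finset.sum_Icc_succ_top (by omega : 1 ≤ k+1)]
    congr 1
    simp only [Nat.add_sub_cancel]
    push_cast
    ring_nf
  have hIcc2 : ∑ i ∈ Finset.Icc 1 (k+1), oh 1 i/(i:ℝ)^2
      = (∑ i ∈ Finset.Icc 1 k, oh 1 i/(i:ℝ)^2) + oh 1 (k+1)/((k:ℝ)+1)^2 := by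
    rw [Finset.sum_Icc_succ_top (by omega : 1 ≤ k+1)]
    congr 1
    push_cast
    ring_nf
  rw [RS, RS, hIcc1, hIcc2, oh1_succ, oh2_succ, Hp2_succ]
  have h1 : ((k:ℝ)+1) ≠ 0 := by positivity
  have h2 : (2*(k:ℝ)+1) ≠ 0 := by positivity
  field_simp
  ring

lemma main_real (k : ℕ) :
    HasSum (fun i : ℕ => oh 1 (i+1) / ((i:ℝ)+1+(k:ℝ))^2) (RS k) := by
  induction k with
  | zero =>
      have h := hasSum_S
      have he : (fun i : ℕ => oh 1 (i+1)/((i:ℝ)+1)^2)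
          = fun i : ℕ => oh 1 (i+1)/((i:ℝ)+1+((0:ℕ):ℝ))^2 := by
        funext i; norm_num
      rw [he] at h
      convert h using 1
      rw [RS]
      norm_num [oh, Hp, H]
  | succ k ih =>
      have hshift := (hasSum_nat_add_iff' 1).2 ih
      have hsum1 : ∑ i ∈ range 1, oh 1 (i+1)/((i:ℝ)+1+(k:ℝ))^2 = 1/(1+(k:ℝ))^2 := by
        simp [oh1_one]
      rw [hsum1] at hshift
      have hstep := hshift.sub (hg k)
      have he : (fun i : ℕ => oh 1 ((i+1)+1)/(((i+1:ℕ):ℝ)+1+(k:ℝ))^2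
            - 1/((2*(i:ℝ)+3)*((i:ℝ)+(k:ℝ)+2)^2))
          = fun i : ℕ => oh 1 (i+1)/((i:ℝ)+1+((k+1:ℕ):ℝ))^2 := by
        funext i
        rw [oh1_succ (i+1)]
        push_cast
        have h1 : ((i:ℝ)+1+1+(k:ℝ)) ≠ 0 := by positivity
        have h2 : (2*((i:ℝ)+1)+1) ≠ 0 := by positivity
        have h3 : ((i:ℝ)+(k:ℝ)+2) ≠ 0 := by positivity
        have h4 : ((i:ℝ)+1+((k:ℝ)+1)) ≠ 0 := by positivity
        field_simp
        ring
      rw [he] at hstep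
      have hval : RS k - 1/(1+(k:ℝ))^2
          - (2/(2*(k:ℝ)+1)^2 * (2*(Real.log 2 - (1 - 1/2)) + (H k - (1 - 1/((k:ℝ)+1))))
            - 1/(2*(k:ℝ)+1) * (π^2/6 - Hp 2 (k+1))) = RS (k+1) := by
        rw [RS_succ]
        ring_nf
      rw [hval] at hstep
      exact hstep

end Stmt17Aux

theorem stmt17 (k : ℕ) (hk : 0 < k) : ∑' i : ℕ, ((oh 1 (i+1) / (((i : ℝ) + 1 + (k : ℝ))^2) : ℝ) : ℂ) = (7/4) * riemannZeta 3 + riemannZeta 2 * ((oh 1 k : ℝ) : ℂ) - 4 * (Real.log 2 : ℂ) * ((oh 2 k : ℝ) : ℂ) - 2 * ((∑ i ∈ Finset.Icc 1 k, H (i-1) / (2 * (i : ℝ) - 1)^2 : ℝ) : ℂ) - ((Hp 2 k * oh 1 k : ℝ) : ℂ) + ((∑ i ∈ Finset.Icc 1 k, oh 1 i / (i : ℝ)^2 : ℝ) : ℂ) := by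
  classical
  have hmain := Stmt17Aux.main_real k
  have hz3 : riemannZeta 3 = ((Stmt17Aux.z3 : ℝ) : ℂ) := by
    have h1 : riemannZeta 3 = ∑' n : ℕ, 1 / (n : ℂ) ^ 3 := by
      have := zeta_nat_eq_tsum_of_gt_one (k := 3) (by norm_num)
      simpa using this
    rw [h1]
    have h2 : (fun n : ℕ => 1 / (n : ℂ) ^ 3) = fun n : ℕ => ((1 / (n:ℝ)^3 : ℝ) : ℂ) := by
      funext n; push_cast; ring
    rw [h2, ← Complex.ofReal_tsum]
    congr 1
    have hsum : Summable (fun n : ℕ => 1/(n:ℝ)^3) :=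
      Real.summable_one_div_nat_pow.2 (by norm_num)
    rw [Summable.tsum_eq_zero_add hsum]
    have h3 : (fun n : ℕ => 1/((n+1:ℕ):ℝ)^3) = fun n : ℕ => 1/((n:ℝ)+1)^3 := by
      funext n; push_cast; ring_nf
    simp only [Nat.cast_zero]
    rw [show ((1:ℝ)/(0:ℝ)^3) = 0 by norm_num, zero_add]
    rw [Stmt17Aux.z3]
    exact tsum_congr fun n => by push_cast; ring_nf
  have hz2 : riemannZeta 2 = ((π^2/6 : ℝ) : ℂ) := by
    rw [riemannZeta_two]; push_cast; ring
  rw [hz3, hz2]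
  have hL : ∑' i : ℕ, ((oh 1 (i+1) / (((i : ℝ) + 1 + (k : ℝ))^2) : ℝ) : ℂ)
      = ((Stmt17Aux.RS k : ℝ) : ℂ) := by
    rw [← Complex.ofReal_tsum]
    congr 1
    exact hmain.tsum_eq
  rw [hL, Stmt17Aux.RS]
  push_cast
  ring
end

section
/- For every positive integer $k$, $\sum_{i=1}^{k} \frac{h_i^{(3)}}{2i-1} = h_k h_k^{(3)} + h_k^{(4)} - \sum_{i=1}^{k} \frac{h_i}{(2i-1)^3}$. -/
open scoped BigOperators

/-!
Symmetric summation by parts: with partial sums `A i = ∑_{j ≤ i} a j` and `B i = ∑_{j ≤ i} b j`,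
the square `[1, k]²` indexing `A k * B k` splits into the two closed triangles `j ≤ i` and
`i ≤ j`, which overlap on the diagonal. Taking `a j = (2j-1)⁻¹` and `b j = (2j-1)⁻³` gives the
identity, the diagonal contributing `h_k^{(4)}`.
-/

theorem Finset.sum_Icc_mul_sum_Icc_add_sum_mul {R : Type*} [CommSemiring R] (a b : ℕ → R)
    (k : ℕ) :
    (∑ i ∈ Icc 1 k, a i) * (∑ i ∈ Icc 1 k, b i) + ∑ i ∈ Icc 1 k, a i * b i =
      ∑ i ∈ Icc 1 k, (∑ j ∈ Icc 1 i, a j) * b i + ∑ i ∈ Icc 1 k, (∑ j ∈ Icc 1 i, b j) * a i := by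
  induction k with
  | zero => simp
  | succ k ih =>
    simp only [sum_Icc_succ_top (Nat.le_add_left 1 k)]
    rw [add_add_add_comm _ _ (∑ i ∈ Icc 1 k, _), ← ih]
    ring

theorem stmt18_general (k : ℕ) : ∑ i ∈ Finset.Icc 1 k, oh 3 i / (2 * (i : ℝ) - 1) = oh 1 k * oh 3 k + oh 4 k - ∑ i ∈ Finset.Icc 1 k, oh 1 i / (2 * (i : ℝ) - 1)^3 := by
  have h := Finset.sum_Icc_mul_sum_Icc_add_sum_mul (fun i : ℕ => 1 / (2 * (i : ℝ) - 1) ^ 1)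
    (fun i : ℕ => 1 / (2 * (i : ℝ) - 1) ^ 3) k
  change oh 1 k * oh 3 k
        + ∑ i ∈ Finset.Icc 1 k, 1 / (2 * (i : ℝ) - 1) ^ 1 * (1 / (2 * (i : ℝ) - 1) ^ 3)
      = ∑ i ∈ Finset.Icc 1 k, oh 1 i * (1 / (2 * (i : ℝ) - 1) ^ 3)
        + ∑ i ∈ Finset.Icc 1 k, oh 3 i * (1 / (2 * (i : ℝ) - 1) ^ 1) at h
  have diagonal :
      ∑ i ∈ Finset.Icc 1 k, 1 / (2 * (i : ℝ) - 1) ^ 1 * (1 / (2 * (i : ℝ) - 1) ^ 3) = oh 4 k :=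
    Finset.sum_congr rfl fun i _ => by rw [one_div_mul_one_div, ← pow_add]
  rw [diagonal] at h
  simp only [mul_one_div, pow_one] at h
  linear_combination -h

theorem stmt18 (k : ℕ) (hk : 0 < k) : ∑ i ∈ Finset.Icc 1 k, oh 3 i / (2 * (i : ℝ) - 1) = oh 1 k * oh 3 k + oh 4 k - ∑ i ∈ Finset.Icc 1 k, oh 1 i / (2 * (i : ℝ) - 1)^3 :=
  stmt18_general k
end
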